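/- Extremal-half dichotomy (order preserved or reversed): Let S and S' be open connected subsets of ℝ^d and h : S → S' a smooth diffeomorphism. Let A be a discrete coordination on S whose axis-separator set 𝒢(A) has a backbone, let B be a discrete coordination on S', and suppose h(grid_S(A)) = grid_{S'}(B). Then there exists a permutation σ of {1,…,d} such that for every i, with j = σ(i) and K := n_i = m_j, exactly one of the following holds: either h(Γ_S⁻(i,A_{i,1})) = Γ_{S'}⁻(j,B_{j,1}) and h(Γ_S⁺(i,A_{i,K})) = Γ_{S'}⁺(j,B_{j,K}), or h(Γ_S⁻(i,A_{i,1})) = Γ_{S'}⁺(j,B_{j,K}) and h(Γ_S⁺(i,A_{i,K})) = Γ_{S'}⁻(j,B_{j,1}). -/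

import Mathlib

/-!
A diffeomorphism has injective differential, so it cannot fold a piece of hyperplane onto two
crossing hyperplanes: by a Baire category argument the image of each (connected) axis separator
of `A`, which lies in the grid of `B`, lies in a single separator of `B`, and by symmetry equals
it. Separators that meet cannot go to parallel separators, so the backbone forces the separators
along axis `i` onto the separators along one axis `σ i`, bijectively. A homeomorphism sends the
two halves of a separator onto the two halves of its image; the extremal halves contain no
separator, hence neither do their images, which pins these down as the extremal halves of `B`.
-/

open Set MeasureTheory Topology

noncomputable section

abbrev Euc (d : ℕ) := EuclideanSpace ℝ (Fin d)

/-- Axis separator: points of `S` whose `i`-th coordinate equals `τ`. -/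
def Gamma {d : ℕ} (S : Set (Euc d)) (i : Fin d) (τ : ℝ) : Set (Euc d) :=
  {z | z ∈ S ∧ z i = τ}

/-- Positive half: points of `S` whose `i`-th coordinate is greater than `τ`. -/
def GammaPos {d : ℕ} (S : Set (Euc d)) (i : Fin d) (τ : ℝ) : Set (Euc d) :=
  {z | z ∈ S ∧ τ < z i}

/-- Negative half: points of `S` whose `i`-th coordinate is less than `τ`. -/
def GammaNeg {d : ℕ} (S : Set (Euc d)) (i : Fin d) (τ : ℝ) : Set (Euc d) :=
  {z | z ∈ S ∧ z i < τ}

/-- `Γ_S(i,τ)` is an axis-separator of `S`: it is nonempty and connected, and both of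
its halves are nonempty and connected. (`IsConnected` includes nonemptiness.) -/
def IsAxisSeparator {d : ℕ} (S : Set (Euc d)) (i : Fin d) (τ : ℝ) : Prop :=
  IsConnected (Gamma S i τ) ∧ IsConnected (GammaPos S i τ) ∧ IsConnected (GammaNeg S i τ)

/-- A smooth diffeomorphism from `S` onto `S'` with explicit inverse `hinv`. -/
structure IsSmoothDiffeoOn {d : ℕ} (h hinv : Euc d → Euc d) (S S' : Set (Euc d)) : Prop where
  mapsTo : Set.MapsTo h S S'
  mapsTo_inv : Set.MapsTo hinv S' S
  left_inv : ∀ z ∈ S, hinv (h z) = z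
  right_inv : ∀ z' ∈ S', h (hinv z') = z'
  smooth : ContDiffOn ℝ (⊤ : ℕ∞) h S
  smooth_inv : ContDiffOn ℝ (⊤ : ℕ∞) hinv S'

/-- A discrete coordination on `S`: for each axis `i`, a strictly increasing nonempty tuple
of thresholds, each giving an axis-separator of `S`. -/
structure DiscreteCoordination {d : ℕ} (S : Set (Euc d)) where
  n : Fin d → ℕ
  n_pos : ∀ i, 0 < n i
  A : (i : Fin d) → Fin (n i) → ℝ
  mono : ∀ i, StrictMono (A i)
  sep : ∀ i k, IsAxisSeparator S i (A i k)

/-- The grid of a discrete coordination: the union of all its axis-separators. -/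
def DiscreteCoordination.grid {d : ℕ} {S : Set (Euc d)} (C : DiscreteCoordination S) :
    Set (Euc d) :=
  ⋃ (i : Fin d), ⋃ (k : Fin (C.n i)), Gamma S i (C.A i k)

/-- The parallel-separator-set along axis `i`. -/
def DiscreteCoordination.axisSet {d : ℕ} {S : Set (Euc d)} (C : DiscreteCoordination S)
    (i : Fin d) : Set (Set (Euc d)) :=
  {H | ∃ k : Fin (C.n i), H = Gamma S i (C.A i k)}

/-- The axis-separator set of a discrete coordination. -/
def DiscreteCoordination.sepSet {d : ℕ} {S : Set (Euc d)} (C : DiscreteCoordination S) :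
    Set (Set (Euc d)) :=
  {H | ∃ (i : Fin d) (k : Fin (C.n i)), H = Gamma S i (C.A i k)}

/-- A backbone: a choice of one separator per axis such that they all meet in a single
point and each of them meets every separator of the grid lying on a different axis. -/
def DiscreteCoordination.HasBackbone {d : ℕ} {S : Set (Euc d)}
    (C : DiscreteCoordination S) : Prop :=
  ∃ kstar : (i : Fin d) → Fin (C.n i),
    (∃ z : Euc d, (⋂ (i : Fin d), Gamma S i (C.A i (kstar i))) = {z}) ∧
    ∀ (i j : Fin d), j ≠ i → ∀ k : Fin (C.n j),
      (Gamma S i (C.A i (kstar i)) ∩ Gamma S j (C.A j k)).Nonempty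

/-- Quantization: `Q(x;T) = Σ_k 1[x ≥ T_k]`. -/
def Q {K : ℕ} (x : ℝ) (T : Fin K → ℝ) : ℕ :=
  (Finset.univ.filter fun k : Fin K => T k ≤ x).card

/-- Quantization with order reversal: `Q⁻(x;T) = Σ_k 1[x ≤ T_k]`. -/
def Qneg {K : ℕ} (x : ℝ) (T : Fin K → ℝ) : ℕ :=
  (Finset.univ.filter fun k : Fin K => x ≤ T k).card

/-- Signed quantization: `Q^{+1} = Q` and `Q^{-1} = Q⁻`. -/
def Qsgn {K : ℕ} (s : ℤ) (x : ℝ) (T : Fin K → ℝ) : ℕ :=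
  if s = 1 then Q x T else Qneg x T

/-- `μ` (absolutely continuous w.r.t. Lebesgue) has a non-removable discontinuity at `z`
if every measurable density of `μ` w.r.t. Lebesgue measure is discontinuous at `z`. -/
def HasNonRemovableDiscont {d : ℕ} (μ : Measure (Euc d)) (z : Euc d) : Prop :=
  ∀ q : Euc d → ENNReal, Measurable q → μ = volume.withDensity q → ¬ ContinuousAt q z

/-- `T` has exactly two connected components, namely `Cp` and `Cm`. -/
def TwoComponents {d : ℕ} (T Cp Cm : Set (Euc d)) : Prop :=
  Cp ≠ Cm ∧
  (∃ x ∈ T, connectedComponentIn T x = Cp) ∧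
  (∃ x ∈ T, connectedComponentIn T x = Cm) ∧
  ∀ x ∈ T, connectedComponentIn T x = Cp ∨ connectedComponentIn T x = Cm

/-- The intersection set of a finite family of separators: points lying on at least two
distinct members. -/
def interSet {d M : ℕ} (H : Fin M → Set (Euc d)) : Set (Euc d) :=
  ⋃ (m : Fin M), ⋃ (m' : Fin M), ⋃ (_ : m ≠ m'), H m ∩ H m'

open Filter Function

theorem PreconnectedSpace.exists_eq_univ_of_isClosed_of_pairwise_disjoint
    {X ι : Type*} [TopologicalSpace X] [PreconnectedSpace X] [Nonempty X] [Finite ι]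
    {s : ι → Set X} (hclosed : ∀ i, IsClosed (s i)) (hdisj : Pairwise (Disjoint on s))
    (hcover : ⋃ i, s i = univ) : ∃ i, s i = univ := by
  obtain ⟨x⟩ := ‹Nonempty X›
  obtain ⟨i, hxi⟩ := mem_iUnion.mp (hcover ▸ mem_univ x)
  refine ⟨i, (isClopen_iff.mp ⟨hclosed i, ?_⟩).resolve_left (nonempty_of_mem hxi).ne_empty⟩
  rw [← isClosed_compl_iff, compl_eq_univ_sdiff, ← hcover, iUnion_sdiff]
  refine isClosed_iUnion_of_finite fun j => ?_
  rcases eq_or_ne i j with rfl | hne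
  · simp
  · simpa only [(hdisj hne.symm).sdiff_eq_left] using hclosed j

theorem LinearMap.ker_le_ker_of_ker_le_ker {𝕜 E : Type*} [Field 𝕜] [AddCommGroup E]
    [Module 𝕜 E] {f ℓ : E →ₗ[𝕜] 𝕜} (hf : f ≠ 0) (h : ker ℓ ≤ ker f) : ker f ≤ ker ℓ := by
  obtain ⟨u, hu⟩ : ∃ u, f u ≠ 0 := by
    by_contra! H
    exact hf (LinearMap.ext H)
  intro v hv
  -- `ℓ v • u - ℓ u • v` lies in `ker ℓ`, and `f` sends it to `ℓ v * f u`.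
  have hw : ℓ v • u - ℓ u • v ∈ ker ℓ := by
    simp only [mem_ker, map_sub, map_smul, smul_eq_mul]
    ring
  have := h hw
  simp only [mem_ker, map_sub, map_smul, smul_eq_mul, mem_ker.mp hv, mul_zero, sub_zero] at this
  exact mem_ker.mpr ((mul_eq_zero.mp this).resolve_right hu)

theorem HasFDerivAt.apply_eq_zero_of_eventually_eq {𝕜 E F : Type*} [NontriviallyNormedField 𝕜]
    [NormedAddCommGroup E] [NormedSpace 𝕜 E] [NormedAddCommGroup F] [NormedSpace 𝕜 F]
    {f : E → F} {f' : E →L[𝕜] F} {x u : E} (hf : HasFDerivAt f f' x)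
    (hc : ∀ᶠ s in 𝓝 (0 : 𝕜), f (x + s • u) = f x) : f' u = 0 :=
  (hf.hasLineDerivAt u).unique ((hasDerivAt_const (0 : 𝕜) (f x)).congr_of_eventuallyEq hc)

theorem xor_of_ne {α : Type*} {x y a b : α} (hx : x = a ∨ x = b) (hy : y = a ∨ y = b)
    (hxy : x ≠ y) (hab : a ≠ b) : Xor (x = a ∧ y = b) (x = b ∧ y = a) := by
  rcases hx with rfl | rfl <;> rcases hy with rfl | rfl <;> simp_all [Xor, eq_comm]

section Gamma

variable {d : ℕ} {S : Set (Euc d)}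

theorem gamma_subset (i : Fin d) (τ : ℝ) : Gamma S i τ ⊆ S := fun _ hz => hz.1

theorem gammaPos_subset (i : Fin d) (τ : ℝ) : GammaPos S i τ ⊆ S := fun _ hz => hz.1

theorem gammaNeg_subset (i : Fin d) (τ : ℝ) : GammaNeg S i τ ⊆ S := fun _ hz => hz.1

theorem isOpen_gammaPos (hS : IsOpen S) (i : Fin d) (τ : ℝ) : IsOpen (GammaPos S i τ) :=
  hS.inter (isOpen_lt continuous_const (EuclideanSpace.proj i).continuous)

theorem isOpen_gammaNeg (hS : IsOpen S) (i : Fin d) (τ : ℝ) : IsOpen (GammaNeg S i τ) :=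
  hS.inter (isOpen_lt (EuclideanSpace.proj i).continuous continuous_const)

theorem isGδ_gamma (hS : IsOpen S) (i : Fin d) (τ : ℝ) : IsGδ (Gamma S i τ) :=
  hS.isGδ.inter (isClosed_eq (EuclideanSpace.proj i).continuous continuous_const).isGδ

theorem gammaNeg_union_gammaPos (i : Fin d) (τ : ℝ) :
    GammaNeg S i τ ∪ GammaPos S i τ = S \ Gamma S i τ := by
  ext z
  simp only [GammaNeg, GammaPos, Gamma, mem_union, Set.mem_sdiff, mem_ofPred_eq]
  constructor
  · rintro (⟨hz, hlt⟩ | ⟨hz, hlt⟩) <;> exact ⟨hz, fun h => by linarith [h.2]⟩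
  · rintro ⟨hz, hne⟩
    rcases lt_trichotomy (z i) τ with hlt | heq | hgt
    exacts [Or.inl ⟨hz, hlt⟩, (hne ⟨hz, heq⟩).elim, Or.inr ⟨hz, hgt⟩]

theorem disjoint_gammaNeg_gammaPos {i : Fin d} {τ τ' : ℝ} (hτ : τ ≤ τ') :
    Disjoint (GammaNeg S i τ) (GammaPos S i τ') :=
  disjoint_left.mpr fun _ hneg hpos => by linarith [hneg.2, hpos.2]

theorem gamma_eq_of_mem_of_mem {i i' : Fin d} {τ τ' : ℝ} {z : Euc d} (hz : z ∈ Gamma S i τ)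
    (hz' : z ∈ Gamma S i' τ') (hi : i = i') : Gamma S i τ = Gamma S i' τ' := by
  subst hi
  rw [← hz.2, ← hz'.2]

theorem tendsto_add_smul_nhdsWithin_gamma (hS : IsOpen S) {i : Fin d} {τ : ℝ} {z u : Euc d}
    (hz : z ∈ Gamma S i τ) (hu : u i = 0) :
    Tendsto (fun s : ℝ => z + s • u) (𝓝 0) (𝓝[Gamma S i τ] z) := by
  have hline : Tendsto (fun s : ℝ => z + s • u) (𝓝 0) (𝓝 z) := by
    have hcont : Continuous fun s : ℝ => z + s • u := by fun_prop
    simpa using hcont.tendsto 0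
  refine tendsto_nhdsWithin_iff.mpr ⟨hline, ?_⟩
  filter_upwards [hline.eventually (hS.mem_nhds hz.1)] with s hs
  exact ⟨hs, by simp [hu, hz.2]⟩

theorem eq_of_gamma_subset (hS : IsOpen S) {i i' : Fin d} {τ τ' : ℝ}
    (hne : (Gamma S i τ).Nonempty) (hsub : Gamma S i τ ⊆ Gamma S i' τ') : i = i' ∧ τ = τ' := by
  obtain ⟨z, hz⟩ := hne
  by_cases hii : i = i'
  · subst hii
    exact ⟨rfl, hz.2.symm.trans (hsub hz).2⟩
  · exfalso
    have hline := (tendsto_add_smul_nhdsWithin_gamma hS hz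
      (u := EuclideanSpace.single i' 1) (by simp [Ne.symm hii])).eventually self_mem_nhdsWithin
    obtain ⟨s, hs, hspos⟩ := ((hline.filter_mono nhdsWithin_le_nhds).and
      (self_mem_nhdsWithin : Ioi (0 : ℝ) ∈ 𝓝[>] 0)).exists
    have h1 := (hsub hs).2
    have h2 := (hsub hz).2
    simp only [PiLp.add_apply, PiLp.smul_apply, PiLp.single_apply, if_true,
      smul_eq_mul, mul_one] at h1
    linarith

end Gamma

theorem eq_and_eq_or_eq_and_eq_of_union_eq {X : Type*} [TopologicalSpace X]
    {U V U' V' : Set X} (hU : IsOpen U) (hV : IsOpen V) (hU' : IsOpen U') (hV' : IsOpen V')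
    (hUc : IsConnected U) (hU'c : IsPreconnected U') (hV'c : IsPreconnected V')
    (hUV : Disjoint U V) (hUV' : Disjoint U' V') (h : U ∪ V = U' ∪ V') :
    (U = U' ∧ V = V') ∨ (U = V' ∧ V = U') := by
  have key : ∀ {U' V' : Set X}, IsPreconnected U' → Disjoint U' V' → U ∪ V = U' ∪ V' →
      U ⊆ U' → U = U' ∧ V = V' := by
    intro U' V' hU'c hUV' h hsub
    have hU'U : U' ⊆ U := by
      refine (hU'c.subset_or_subset hU hV hUV (h ▸ subset_union_left)).resolve_right
        fun hU'V => ?_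
      obtain ⟨x, hx⟩ := hUc.nonempty
      exact disjoint_left.mp hUV hx (hU'V (hsub hx))
    have hUU' : U = U' := hsub.antisymm hU'U
    refine ⟨hUU', ?_⟩
    rw [← hUV.sdiff_eq_right, ← union_sdiff_left, h, hUU', union_sdiff_left, hUV'.sdiff_eq_right]
  rcases hUc.isPreconnected.subset_or_subset hU' hV' hUV' (h ▸ subset_union_left) with hsub | hsub
  · exact Or.inl (key hU'c hUV' h hsub)
  · exact Or.inr (key hV'c hUV'.symm (h.trans (union_comm _ _)) hsub)

namespace IsSmoothDiffeoOn

variable {d : ℕ} {S S' : Set (Euc d)} {h hinv : Euc d → Euc d}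

theorem symm (hd : IsSmoothDiffeoOn h hinv S S') : IsSmoothDiffeoOn hinv h S' S :=
  ⟨hd.mapsTo_inv, hd.mapsTo, hd.right_inv, hd.left_inv, hd.smooth_inv, hd.smooth⟩

theorem injOn (hd : IsSmoothDiffeoOn h hinv S S') : InjOn h S :=
  LeftInvOn.injOn hd.left_inv

theorem image_eq (hd : IsSmoothDiffeoOn h hinv S S') : h '' S = S' :=
  hd.mapsTo.image_subset.antisymm fun z' hz' => ⟨hinv z', hd.mapsTo_inv hz', hd.right_inv z' hz'⟩

theorem inv_image_image (hd : IsSmoothDiffeoOn h hinv S S') {X : Set (Euc d)} (hX : X ⊆ S) :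
    hinv '' (h '' X) = X := by
  rw [image_image]
  exact (image_congr fun z hz => hd.left_inv z (hX hz)).trans (image_id X)

theorem image_diff (hd : IsSmoothDiffeoOn h hinv S S') {X : Set (Euc d)} (hX : X ⊆ S) :
    h '' (S \ X) = S' \ h '' X := by
  rw [hd.injOn.image_sdiff_subset hX, hd.image_eq]

theorem isOpen_image (hd : IsSmoothDiffeoOn h hinv S S') (hS' : IsOpen S') {U : Set (Euc d)}
    (hU : IsOpen U) (hUS : U ⊆ S) : IsOpen (h '' U) := by
  have : h '' U = S' ∩ hinv ⁻¹' U := by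
    ext w
    constructor
    · rintro ⟨z, hz, rfl⟩
      exact ⟨hd.mapsTo (hUS hz), by rwa [mem_preimage, hd.left_inv z (hUS hz)]⟩
    · rintro ⟨hw, hw'⟩
      exact ⟨hinv w, hw', hd.right_inv w hw⟩
  rw [this]
  exact hd.smooth_inv.continuousOn.isOpen_inter_preimage hS' hU

theorem differentiableAt (hd : IsSmoothDiffeoOn h hinv S S') (hS : IsOpen S) {z : Euc d}
    (hz : z ∈ S) : DifferentiableAt ℝ h z :=
  (hd.smooth.contDiffAt (hS.mem_nhds hz)).differentiableAt (by simp)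

theorem surjective_fderiv (hd : IsSmoothDiffeoOn h hinv S S') (hS : IsOpen S) (hS' : IsOpen S')
    {z : Euc d} (hz : z ∈ S) : Surjective (fderiv ℝ h z) := by
  have hinvz : hinv (h z) = z := hd.left_inv z hz
  have hchain : (fderiv ℝ h z).comp (fderiv ℝ hinv (h z)) = ContinuousLinearMap.id ℝ (Euc d) := by
    have hcomp := fderiv_comp (h z) (hinvz ▸ hd.differentiableAt hS hz)
      (hd.symm.differentiableAt hS' (hd.mapsTo hz))
    have hid : h ∘ hinv =ᶠ[𝓝 (h z)] id :=
      eventuallyEq_of_mem (hS'.mem_nhds (hd.mapsTo hz)) hd.right_inv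
    rwa [hid.fderiv_eq, fderiv_id, hinvz, eq_comm] at hcomp
  exact fun v => ⟨fderiv ℝ hinv (h z) v, by simpa using congrArg (· v) hchain⟩

theorem image_halves (hd : IsSmoothDiffeoOn h hinv S S') (hS : IsOpen S) (hS' : IsOpen S')
    {i j : Fin d} {τ τ' : ℝ} (hsep : IsAxisSeparator S i τ) (hsep' : IsAxisSeparator S' j τ')
    (himg : h '' Gamma S i τ = Gamma S' j τ') :
    (h '' GammaNeg S i τ = GammaNeg S' j τ' ∧ h '' GammaPos S i τ = GammaPos S' j τ') ∨
      (h '' GammaNeg S i τ = GammaPos S' j τ' ∧ h '' GammaPos S i τ = GammaNeg S' j τ') := by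
  refine eq_and_eq_or_eq_and_eq_of_union_eq
    (hd.isOpen_image hS' (isOpen_gammaNeg hS i τ) (gammaNeg_subset i τ))
    (hd.isOpen_image hS' (isOpen_gammaPos hS i τ) (gammaPos_subset i τ))
    (isOpen_gammaNeg hS' j τ') (isOpen_gammaPos hS' j τ')
    (hsep.2.2.image h (hd.smooth.continuousOn.mono (gammaNeg_subset i τ)))
    hsep'.2.2.isPreconnected hsep'.2.1.isPreconnected
    ((disjoint_gammaNeg_gammaPos le_rfl).image hd.injOn (gammaNeg_subset i τ)
      (gammaPos_subset i τ))
    (disjoint_gammaNeg_gammaPos le_rfl) ?_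
  rw [← image_union, gammaNeg_union_gammaPos, gammaNeg_union_gammaPos,
    hd.image_diff (gamma_subset i τ), himg]

end IsSmoothDiffeoOn

section Locus

variable {d : ℕ} {S : Set (Euc d)} {h : Euc d → Euc d}

def hyperplaneLocus (h : Euc d → Euc d) (i j : Fin d) : Set (Euc d) :=
  {z | ∀ u : Euc d, u i = 0 → fderiv ℝ h z u j = 0}

theorem isClosed_preimage_hyperplaneLocus {T : Set (Euc d)} (hcont : ContinuousOn (fderiv ℝ h) T)
    (i j : Fin d) : IsClosed ((↑) ⁻¹' hyperplaneLocus h i j : Set T) := by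
  have : ((↑) ⁻¹' hyperplaneLocus h i j : Set T) =
      ⋂ (u : Euc d) (_ : u i = 0), {y : T | fderiv ℝ h y u j = 0} := by
    ext y
    simp [hyperplaneLocus]
  rw [this]
  refine isClosed_biInter fun u _ => isClosed_eq ?_ continuous_const
  exact (EuclideanSpace.proj j).continuous.comp
    ((ContinuousLinearMap.apply ℝ (Euc d) u).continuous.comp
      (continuousOn_iff_continuous_domRestrict.mp hcont))

theorem eq_of_mem_hyperplaneLocus {z : Euc d} (hsurj : Surjective (fderiv ℝ h z)) {i j j' : Fin d}
    (hj : z ∈ hyperplaneLocus h i j) (hj' : z ∈ hyperplaneLocus h i j') : j = j' := by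
  let coord : Fin d → Euc d →ₗ[ℝ] ℝ := fun k => (EuclideanSpace.proj k : Euc d →L[ℝ] ℝ)
  let f : Fin d → Euc d →ₗ[ℝ] ℝ := fun k => (coord k).comp (fderiv ℝ h z : Euc d →ₗ[ℝ] Euc d)
  have hf : ∀ {k}, z ∈ hyperplaneLocus h i k → LinearMap.ker (coord i) ≤ LinearMap.ker (f k) :=
    fun hk u hu => hk u hu
  obtain ⟨v, hv⟩ := hsurj (EuclideanSpace.single j' 1)
  have hfv : ∀ k, f k v = if k = j' then 1 else 0 := fun k => by
    simp [f, coord, hv, PiLp.single_apply]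
  have hf0 : f j ≠ 0 := fun h0 => by
    obtain ⟨w, hw⟩ := hsurj (EuclideanSpace.single j 1)
    simpa [f, coord, hw] using LinearMap.congr_fun h0 w
  by_contra hne
  have hker := (LinearMap.ker_le_ker_of_ker_le_ker hf0 (hf hj)).trans (hf hj')
  have := hker (show v ∈ LinearMap.ker (f j) by simp [hfv, hne])
  simp [hfv] at this

theorem mem_hyperplaneLocus_of_eventually_eq (hS : IsOpen S) {z : Euc d} {i j : Fin d} {τ : ℝ}
    (hdiff : DifferentiableAt ℝ h z) (hz : z ∈ Gamma S i τ)
    (hconst : ∀ᶠ w in 𝓝[Gamma S i τ] z, h w j = h z j) : z ∈ hyperplaneLocus h i j := by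
  intro u hu
  have hF : HasFDerivAt (EuclideanSpace.proj j ∘ h)
      ((EuclideanSpace.proj j).comp (fderiv ℝ h z)) z :=
    (EuclideanSpace.proj j).hasFDerivAt.comp z hdiff.hasFDerivAt
  exact hF.apply_eq_zero_of_eventually_eq
    ((tendsto_add_smul_nhdsWithin_gamma hS hz hu).eventually hconst)

end Locus

theorem eq_univ_of_dense_of_subset_of_isClosed {X : Type*} [TopologicalSpace X] {s t : Set X}
    (hs : Dense s) (hst : s ⊆ t) (ht : IsClosed t) : t = univ := by
  rw [← ht.closure_eq, (hs.mono hst).closure_eq]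

/-- Baire category argument: the interiors of the `F t` are dense, so they force one `W k` to be
everything, and then only the `F t` over `k` have interior points. -/
theorem exists_forall_exists_mem_of_interior_subset {Y ι κ : Type*} [TopologicalSpace Y]
    [BaireSpace Y] [PreconnectedSpace Y] [Nonempty Y] [Finite ι] [Finite κ]
    {F : ι → Set Y} {W : κ → Set Y} (π : ι → κ) (hF : ∀ t, IsClosed (F t))
    (hF_cover : ⋃ t, F t = univ) (hW : ∀ k, IsClosed (W k)) (hW_disj : Pairwise (Disjoint on W))
    (hFW : ∀ t, interior (F t) ⊆ W (π t)) : ∃ k, ∀ y, ∃ t, π t = k ∧ y ∈ F t := by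
  have hdense := dense_iUnion_interior_of_closed hF hF_cover
  obtain ⟨k, hk⟩ := PreconnectedSpace.exists_eq_univ_of_isClosed_of_pairwise_disjoint hW hW_disj
    (eq_univ_of_dense_of_subset_of_isClosed hdense
      (iUnion_subset fun t => (hFW t).trans (subset_iUnion W (π t))) (isClosed_iUnion_of_finite hW))
  have hcover : ⋃ (t) (_ : π t = k), F t = univ := by
    refine eq_univ_of_dense_of_subset_of_isClosed hdense (iUnion_subset fun t y hy => ?_)
      (isClosed_iUnion_of_finite fun t => isClosed_iUnion_of_finite fun _ => hF t)
    have hπ : π t = k := by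
      by_contra hne
      exact disjoint_left.mp (hW_disj hne) (hFW t hy) (hk ▸ mem_univ y)
    exact mem_biUnion hπ (interior_subset hy)
  refine ⟨k, fun y => ?_⟩
  obtain ⟨t, ht, hy⟩ := mem_iUnion₂.mp (hcover ▸ mem_univ y)
  exact ⟨t, ht, hy⟩

theorem IsSmoothDiffeoOn.exists_image_gamma_subset {d : ℕ} {S S' : Set (Euc d)}
    {h hinv : Euc d → Euc d} (hd : IsSmoothDiffeoOn h hinv S S') (hS : IsOpen S) (hS' : IsOpen S')
    (C : DiscreteCoordination S') {i : Fin d} {τ : ℝ} (hΓ : IsConnected (Gamma S i τ))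
    (hgrid : h '' Gamma S i τ ⊆ C.grid) : ∃ j c, h '' Gamma S i τ ⊆ Gamma S' j (C.A j c) := by
  set Γ := Gamma S i τ
  have : ConnectedSpace Γ := isConnected_iff_connectedSpace.mp hΓ
  have : BaireSpace Γ := (isGδ_gamma hS i τ).baireSpace_of_t2Space_locallyCompactSpace
  -- Local constancy of `h · t.1` puts the interior of `F t` into `W t.1`, and injectivity of `Dh`
  -- makes the `W j` pairwise disjoint.
  let F : (Σ j, Fin (C.n j)) → Set Γ := fun t => {y | h y t.1 = C.A t.1 t.2}
  let W : Fin d → Set Γ := fun j => (↑) ⁻¹' hyperplaneLocus h i j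
  have hF : ∀ t, IsClosed (F t) := fun t =>
    isClosed_eq ((EuclideanSpace.proj t.1).continuous.comp
      (continuousOn_iff_continuous_domRestrict.mp (hd.smooth.continuousOn.mono (gamma_subset i τ))))
      continuous_const
  have hF_cover : ⋃ t, F t = univ := eq_univ_of_forall fun y => by
    obtain ⟨j, c, hc⟩ : ∃ j c, h y ∈ Gamma S' j (C.A j c) := by
      simpa [DiscreteCoordination.grid] using hgrid (mem_image_of_mem h y.2)
    exact mem_iUnion.mpr ⟨⟨j, c⟩, hc.2⟩
  have hW : ∀ j, IsClosed (W j) := isClosed_preimage_hyperplaneLocus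
    ((hd.smooth.continuousOn_fderiv_of_isOpen hS (by simp)).mono (gamma_subset i τ)) i
  have hW_disj : Pairwise (Disjoint on W) := fun j j' hjj' => disjoint_left.mpr fun y hy hy' =>
    hjj' (eq_of_mem_hyperplaneLocus (hd.surjective_fderiv hS hS' y.2.1) hy hy')
  have hFW : ∀ t, interior (F t) ⊆ W t.1 := by
    intro t y hy
    refine mem_hyperplaneLocus_of_eventually_eq hS (hd.differentiableAt hS y.2.1) y.2 ?_
    rw [← eventually_nhds_subtype_iff]
    filter_upwards [mem_interior_iff_mem_nhds.mp hy] with y' hy'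
    exact hy'.trans (interior_subset hy : y ∈ F t).symm
  obtain ⟨j₀, hcover⟩ := exists_forall_exists_mem_of_interior_subset Sigma.fst hF hF_cover hW
    hW_disj hFW
  obtain ⟨c₀, hc₀⟩ := PreconnectedSpace.exists_eq_univ_of_isClosed_of_pairwise_disjoint
    (fun c => hF ⟨j₀, c⟩)
    (fun c c' hcc' => disjoint_left.mpr fun _ hy hy' =>
      hcc' ((C.mono j₀).injective (hy.symm.trans hy')))
    (eq_univ_of_forall fun y => by
      obtain ⟨⟨j, c⟩, rfl, hy⟩ := hcover y
      exact mem_iUnion.mpr ⟨c, hy⟩)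
  refine ⟨j₀, c₀, ?_⟩
  rintro _ ⟨z, hz, rfl⟩
  exact ⟨hd.mapsTo hz.1, (hc₀ ▸ mem_univ (⟨z, hz⟩ : Γ) : (⟨z, hz⟩ : Γ) ∈ F ⟨j₀, c₀⟩)⟩

namespace DiscreteCoordination

variable {d : ℕ} {S : Set (Euc d)} (C : DiscreteCoordination S)

def first (i : Fin d) : Fin (C.n i) := ⟨0, C.n_pos i⟩

def last (i : Fin d) : Fin (C.n i) := ⟨C.n i - 1, Nat.sub_lt (C.n_pos i) Nat.one_pos⟩

theorem A_first_le (i : Fin d) (k : Fin (C.n i)) : C.A i (C.first i) ≤ C.A i k :=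
  (C.mono i).monotone (Nat.zero_le k)

theorem A_le_last (i : Fin d) (k : Fin (C.n i)) : C.A i k ≤ C.A i (C.last i) :=
  (C.mono i).monotone (Nat.le_sub_one_of_lt k.isLt)

theorem A_first_lt {i : Fin d} {k : Fin (C.n i)} (hk : k ≠ C.first i) :
    C.A i (C.first i) < C.A i k :=
  C.mono i ((C.first i).le_iff_val_le_val.mpr (Nat.zero_le k) |>.lt_of_ne (Ne.symm hk))

theorem A_lt_last {i : Fin d} {k : Fin (C.n i)} (hk : k ≠ C.last i) :
    C.A i k < C.A i (C.last i) :=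
  C.mono i ((k.le_iff_val_le_val.mpr (Nat.le_sub_one_of_lt k.isLt)).lt_of_ne hk)

theorem gamma_subset_grid (i : Fin d) (k : Fin (C.n i)) : Gamma S i (C.A i k) ⊆ C.grid :=
  subset_iUnion₂ (s := fun i k => Gamma S i (C.A i k)) i k

theorem grid_subset : C.grid ⊆ S :=
  iUnion₂_subset fun i _ => gamma_subset i _

theorem ncard_axisSet (hS : IsOpen S) (i : Fin d) : (C.axisSet i).ncard = C.n i := by
  have : C.axisSet i = range fun k => Gamma S i (C.A i k) := by
    ext H
    simp [axisSet, eq_comm]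
  rw [this, ncard_range_of_injective, Nat.card_fin]
  intro k k' hkk'
  exact (C.mono i).injective (eq_of_gamma_subset hS (C.sep i k).1.nonempty hkk'.subset).2

theorem gammaNeg_first_ne_gammaPos_last (i : Fin d) :
    GammaNeg S i (C.A i (C.first i)) ≠ GammaPos S i (C.A i (C.last i)) := fun heq => by
  obtain ⟨z, hz⟩ := (C.sep i (C.first i)).2.2.nonempty
  exact disjoint_left.mp (disjoint_gammaNeg_gammaPos (C.A_le_last i _)) hz (heq ▸ hz)

theorem not_gamma_subset_gammaNeg_first (i : Fin d) (k : Fin (C.n i)) :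
    ¬ Gamma S i (C.A i k) ⊆ GammaNeg S i (C.A i (C.first i)) := fun hsub => by
  obtain ⟨z, hz⟩ := (C.sep i k).1.nonempty
  linarith [(hsub hz).2, hz.2, C.A_first_le i k]

theorem not_gamma_subset_gammaPos_last (i : Fin d) (k : Fin (C.n i)) :
    ¬ Gamma S i (C.A i k) ⊆ GammaPos S i (C.A i (C.last i)) := fun hsub => by
  obtain ⟨z, hz⟩ := (C.sep i k).1.nonempty
  linarith [(hsub hz).2, hz.2, C.A_le_last i k]

/-- Every half of a separator along axis `j` other than the two extremal ones contains the
extremal separator on its side. -/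
theorem eq_extremal_of_forall_not_gamma_subset {Y : Set (Euc d)} {j : Fin d} {c : Fin (C.n j)}
    (hY : Y = GammaNeg S j (C.A j c) ∨ Y = GammaPos S j (C.A j c))
    (hsub : ∀ c', ¬ Gamma S j (C.A j c') ⊆ Y) :
    Y = GammaNeg S j (C.A j (C.first j)) ∨ Y = GammaPos S j (C.A j (C.last j)) := by
  rcases hY with rfl | rfl
  · by_cases hc : c = C.first j
    · exact Or.inl (hc ▸ rfl)
    · exact (hsub (C.first j) fun z hz => ⟨hz.1, hz.2 ▸ C.A_first_lt hc⟩).elim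
  · by_cases hc : c = C.last j
    · exact Or.inr (hc ▸ rfl)
    · exact (hsub (C.last j) fun z hz => ⟨hz.1, hz.2 ▸ C.A_lt_last hc⟩).elim

end DiscreteCoordination

namespace IsSmoothDiffeoOn

variable {d : ℕ} {S S' : Set (Euc d)} {h hinv : Euc d → Euc d}
  {CA : DiscreteCoordination S} {CB : DiscreteCoordination S'}

theorem inv_image_eq_of_image_eq (hd : IsSmoothDiffeoOn h hinv S S') {X Y : Set (Euc d)}
    (hX : X ⊆ S) (hXY : h '' X = Y) : hinv '' Y = X :=
  hXY ▸ hd.inv_image_image hX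

theorem exists_image_gamma_eq (hd : IsSmoothDiffeoOn h hinv S S') (hS : IsOpen S)
    (hS' : IsOpen S') (hgrid : h '' CA.grid = CB.grid) (i : Fin d) (k : Fin (CA.n i)) :
    ∃ j c, h '' Gamma S i (CA.A i k) = Gamma S' j (CB.A j c) := by
  obtain ⟨j, c, hsub⟩ := hd.exists_image_gamma_subset hS hS' CB (CA.sep i k).1
    (hgrid ▸ image_mono (CA.gamma_subset_grid i k))
  obtain ⟨i', k', hsub'⟩ := hd.symm.exists_image_gamma_subset hS' hS CA (CB.sep j c).1
    (hd.inv_image_eq_of_image_eq CA.grid_subset hgrid ▸ image_mono (CB.gamma_subset_grid j c))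
  have hback : Gamma S i (CA.A i k) ⊆ Gamma S i' (CA.A i' k') := by
    rw [← hd.inv_image_image (gamma_subset i _)]
    exact (image_mono hsub).trans hsub'
  obtain ⟨rfl, hτ⟩ := eq_of_gamma_subset hS (CA.sep i k).1.nonempty hback
  refine ⟨j, c, hsub.antisymm ?_⟩
  rw [← hd.symm.inv_image_image (gamma_subset j _), hτ]
  exact image_mono hsub'

theorem exists_perm_image_axisSet_eq (hd : IsSmoothDiffeoOn h hinv S S') (hS : IsOpen S)
    (hS' : IsOpen S') (hbb : CA.HasBackbone) (hgrid : h '' CA.grid = CB.grid) :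
    ∃ σ : Equiv.Perm (Fin d), ∀ i, image h '' CA.axisSet i = CB.axisSet (σ i) := by
  choose α γ hαγ using hd.exists_image_gamma_eq hS hS' hgrid
  have hsame_axis : ∀ i k i' k', (Gamma S i (CA.A i k) ∩ Gamma S i' (CA.A i' k')).Nonempty →
      α i k = α i' k' → i = i' := by
    rintro i k i' k' ⟨z, hz, hz'⟩ hα
    have himg := gamma_eq_of_mem_of_mem (hαγ i k ▸ mem_image_of_mem h hz)
      (hαγ i' k' ▸ mem_image_of_mem h hz') hα
    rw [← hαγ, ← hαγ, hd.injOn.image_eq_image_iff (gamma_subset _ _) (gamma_subset _ _)] at himg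
    exact (eq_of_gamma_subset hS (CA.sep i k).1.nonempty himg.subset).1
  obtain ⟨kstar, -, hmeet⟩ := hbb
  have hinj : Injective fun i => α i (kstar i) := fun i i' hα => by
    by_contra hne
    exact hne (hsame_axis i _ i' _ (hmeet i i' (Ne.symm hne) _) hα)
  let σ := Equiv.ofBijective _ (Finite.injective_iff_bijective.mp hinj)
  have haxis : ∀ i k, α i k = σ i := by
    intro i k
    obtain ⟨i', hi'⟩ := σ.surjective (α i k)
    have : i' = i := by
      by_contra hne
      exact hne (hsame_axis i' _ i k (hmeet i' i (Ne.symm hne) k) hi')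
    rw [← hi', this]
  refine ⟨σ, fun i => Subset.antisymm ?_ ?_⟩
  · rintro _ ⟨_, ⟨k, rfl⟩, rfl⟩
    rw [hαγ i k, ← haxis i k]
    exact ⟨γ i k, rfl⟩
  · rintro _ ⟨c, rfl⟩
    obtain ⟨i', k', hback⟩ := hd.symm.exists_image_gamma_eq hS' hS
      (hd.inv_image_eq_of_image_eq CA.grid_subset hgrid) (σ i) c
    have hfwd := hd.symm.inv_image_eq_of_image_eq (gamma_subset _ _) hback
    obtain rfl : i' = i := σ.injective <| by
      rw [← haxis i' k']
      exact (eq_of_gamma_subset hS' (CB.sep _ _).1.nonempty ((hαγ i' k').symm.trans hfwd).subset).1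
    exact ⟨_, ⟨k', rfl⟩, hfwd⟩

theorem n_eq_of_image_axisSet_eq (hd : IsSmoothDiffeoOn h hinv S S') (hS : IsOpen S)
    (hS' : IsOpen S') {i j : Fin d} (hij : image h '' CA.axisSet i = CB.axisSet j) :
    CA.n i = CB.n j := by
  have hinjOn : InjOn (image h) (CA.axisSet i) := by
    rintro _ ⟨k, rfl⟩ _ ⟨k', rfl⟩ he
    exact (hd.injOn.image_eq_image_iff (gamma_subset _ _) (gamma_subset _ _)).mp he
  rw [← CA.ncard_axisSet hS, ← CB.ncard_axisSet hS', ← hij, hinjOn.ncard_image]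

theorem not_gamma_subset_image (hd : IsSmoothDiffeoOn h hinv S S') {i j : Fin d}
    (hij : image h '' CA.axisSet i = CB.axisSet j) {X : Set (Euc d)} (hX : X ⊆ S)
    (hXA : ∀ k, ¬ Gamma S i (CA.A i k) ⊆ X) (c : Fin (CB.n j)) :
    ¬ Gamma S' j (CB.A j c) ⊆ h '' X := fun hsub => by
  obtain ⟨_, ⟨k, rfl⟩, hk⟩ : Gamma S' j (CB.A j c) ∈ image h '' CA.axisSet i := hij ▸ ⟨c, rfl⟩
  exact hXA k ((hd.injOn.image_subset_image_iff (gamma_subset _ _) hX).mp (hk ▸ hsub))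

theorem image_extremal_halves (hd : IsSmoothDiffeoOn h hinv S S') (hS : IsOpen S)
    (hS' : IsOpen S') {i j : Fin d} (hij : image h '' CA.axisSet i = CB.axisSet j) :
    Xor
      (h '' GammaNeg S i (CA.A i (CA.first i)) = GammaNeg S' j (CB.A j (CB.first j)) ∧
        h '' GammaPos S i (CA.A i (CA.last i)) = GammaPos S' j (CB.A j (CB.last j)))
      (h '' GammaNeg S i (CA.A i (CA.first i)) = GammaPos S' j (CB.A j (CB.last j)) ∧
        h '' GammaPos S i (CA.A i (CA.last i)) = GammaNeg S' j (CB.A j (CB.first j))) := by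
  have himg (k : Fin (CA.n i)) : ∃ c, h '' Gamma S i (CA.A i k) = Gamma S' j (CB.A j c) :=
    (hij ▸ mem_image_of_mem (image h) ⟨k, rfl⟩ : h '' Gamma S i (CA.A i k) ∈ CB.axisSet j)
  obtain ⟨c₀, hc₀⟩ := himg (CA.first i)
  obtain ⟨c₁, hc₁⟩ := himg (CA.last i)
  have hneg := CB.eq_extremal_of_forall_not_gamma_subset
    ((hd.image_halves hS hS' (CA.sep i _) (CB.sep j c₀) hc₀).imp And.left And.left)
    (hd.not_gamma_subset_image hij (gammaNeg_subset _ _) (CA.not_gamma_subset_gammaNeg_first i))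
  have hpos := CB.eq_extremal_of_forall_not_gamma_subset
    ((hd.image_halves hS hS' (CA.sep i _) (CB.sep j c₁) hc₁).imp And.right And.right).symm
    (hd.not_gamma_subset_image hij (gammaPos_subset _ _) (CA.not_gamma_subset_gammaPos_last i))
  refine xor_of_ne hneg hpos (fun he => CA.gammaNeg_first_ne_gammaPos_last i ?_)
    (CB.gammaNeg_first_ne_gammaPos_last j)
  exact (hd.injOn.image_eq_image_iff (gammaNeg_subset _ _) (gammaPos_subset _ _)).mp he

end IsSmoothDiffeoOn

theorem extremal_half_dichotomy_general
    {d : ℕ} {S S' : Set (Euc d)} (hS : IsOpen S) (hS' : IsOpen S')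
    {h hinv : Euc d → Euc d} (hdiff : IsSmoothDiffeoOn h hinv S S')
    (CA : DiscreteCoordination S) (hbb : CA.HasBackbone)
    (CB : DiscreteCoordination S')
    (hgrid : h '' CA.grid = CB.grid) :
    ∃ σ : Equiv.Perm (Fin d), ∀ i : Fin d,
      CA.n i = CB.n (σ i) ∧
      Xor'
        (h '' GammaNeg S i (CA.A i ⟨0, CA.n_pos i⟩) =
            GammaNeg S' (σ i) (CB.A (σ i) ⟨0, CB.n_pos (σ i)⟩) ∧
         h '' GammaPos S i (CA.A i ⟨CA.n i - 1, Nat.sub_lt (CA.n_pos i) Nat.one_pos⟩) =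
            GammaPos S' (σ i) (CB.A (σ i) ⟨CB.n (σ i) - 1, Nat.sub_lt (CB.n_pos (σ i)) Nat.one_pos⟩))
        (h '' GammaNeg S i (CA.A i ⟨0, CA.n_pos i⟩) =
            GammaPos S' (σ i) (CB.A (σ i) ⟨CB.n (σ i) - 1, Nat.sub_lt (CB.n_pos (σ i)) Nat.one_pos⟩) ∧
         h '' GammaPos S i (CA.A i ⟨CA.n i - 1, Nat.sub_lt (CA.n_pos i) Nat.one_pos⟩) =
            GammaNeg S' (σ i) (CB.A (σ i) ⟨0, CB.n_pos (σ i)⟩)) := by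
  obtain ⟨σ, hσ⟩ := hdiff.exists_perm_image_axisSet_eq hS hS' hbb hgrid
  exact ⟨σ, fun i => ⟨hdiff.n_eq_of_image_axisSet_eq hS hS' (hσ i),
    hdiff.image_extremal_halves hS hS' (hσ i)⟩⟩

/-- **Extremal-half dichotomy (order preserved or reversed).** -/
theorem extremal_half_dichotomy
    {d : ℕ} {S S' : Set (Euc d)} (hS : IsOpen S) (hSc : IsConnected S)
    (hS' : IsOpen S') (hS'c : IsConnected S')
    {h hinv : Euc d → Euc d} (hdiff : IsSmoothDiffeoOn h hinv S S')
    (CA : DiscreteCoordination S) (hbb : CA.HasBackbone)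
    (CB : DiscreteCoordination S')
    (hgrid : h '' CA.grid = CB.grid) :
    ∃ σ : Equiv.Perm (Fin d), ∀ i : Fin d,
      CA.n i = CB.n (σ i) ∧
      Xor'
        (h '' GammaNeg S i (CA.A i ⟨0, CA.n_pos i⟩) =
            GammaNeg S' (σ i) (CB.A (σ i) ⟨0, CB.n_pos (σ i)⟩) ∧
         h '' GammaPos S i (CA.A i ⟨CA.n i - 1, Nat.sub_lt (CA.n_pos i) Nat.one_pos⟩) =
            GammaPos S' (σ i) (CB.A (σ i) ⟨CB.n (σ i) - 1, Nat.sub_lt (CB.n_pos (σ i)) Nat.one_pos⟩))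
        (h '' GammaNeg S i (CA.A i ⟨0, CA.n_pos i⟩) =
            GammaPos S' (σ i) (CB.A (σ i) ⟨CB.n (σ i) - 1, Nat.sub_lt (CB.n_pos (σ i)) Nat.one_pos⟩) ∧
         h '' GammaPos S i (CA.A i ⟨CA.n i - 1, Nat.sub_lt (CA.n_pos i) Nat.one_pos⟩) =
            GammaNeg S' (σ i) (CB.A (σ i) ⟨0, CB.n_pos (σ i)⟩)) :=
  extremal_half_dichotomy_general hS hS' hdiff CA hbb CB hgrid
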